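/- Let S be a numerical semigroup. For every j ∈ {1, ..., m(S)−1}, one has η_j = ⌊w_j/m⌋ − ⌊w_{j−1}/m⌋, where m = m(S). -/

import Mathlib

/-- A numerical semigroup: an additive submonoid of `ℕ` (containing `0`, closed under
addition) whose complement in `ℕ` is finite. -/
structure NumericalSemigroup where
  carrier : Set ℕ
  zero_mem : 0 ∈ carrier
  add_mem : ∀ ⦃a b : ℕ⦄, a ∈ carrier → b ∈ carrier → a + b ∈ carrier
  cofinite : (carrierᶜ : Set ℕ).Finite

namespace NumericalSemigroup

/-- The multiplicity `m(S)`: the smallest positive element of `S`. -/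
noncomputable def mult (S : NumericalSemigroup) : ℕ :=
  sInf {s : ℕ | s ∈ S.carrier ∧ 0 < s}

/-- The embedding dimension `ν(S)`: the cardinality of the (unique) minimal system of
generators of `S`, i.e. the least cardinality of a generating set. -/
noncomputable def embdim (S : NumericalSemigroup) : ℕ :=
  sInf {n : ℕ | ∃ G : Finset ℕ,
    S.carrier = (AddSubmonoid.closure (G : Set ℕ) : Set ℕ) ∧ G.card = n}

/-- The Frobenius number `f(S)`: the largest integer not belonging to `S`. -/
noncomputable def frob (S : NumericalSemigroup) : ℤ :=
  sSup {x : ℤ | ∀ s ∈ S.carrier, (s : ℤ) ≠ x}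

/-- `n(S)`: the number of elements of `S` smaller than the Frobenius number. -/
noncomputable def small (S : NumericalSemigroup) : ℕ :=
  {s : ℕ | s ∈ S.carrier ∧ (s : ℤ) < S.frob}.ncard

/-- The type `t(S)`: the number of pseudo-Frobenius numbers of `S`, i.e. integers
`x ∉ S` such that `x + s ∈ S` for every nonzero `s ∈ S`. -/
noncomputable def typ (S : NumericalSemigroup) : ℕ :=
  {x : ℤ | (∀ s ∈ S.carrier, (s : ℤ) ≠ x) ∧
    ∀ s ∈ S.carrier, 0 < s → ∃ u ∈ S.carrier, (u : ℤ) = x + s}.ncard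

/-- The `k`-th interval `I_k = [k·m, (k+1)·m - 1]` (for a given `m`). -/
def interval (m k : ℕ) : Set ℕ := Set.Ico (k * m) ((k + 1) * m)

/-- `n_k`: the number of elements of `S ∩ I_k` smaller than the Frobenius number. -/
noncomputable def nk (S : NumericalSemigroup) (k : ℕ) : ℕ :=
  {s : ℕ | s ∈ S.carrier ∩ interval S.mult k ∧ (s : ℤ) < S.frob}.ncard

/-- `L = ⌊f(S)/m(S)⌋`. -/
noncomputable def Lindex (S : NumericalSemigroup) : ℤ := S.frob / (S.mult : ℤ)

/-- `ρ = f(S) + 1 - L·m(S)`. -/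
noncomputable def rho (S : NumericalSemigroup) : ℤ :=
  S.frob + 1 - S.Lindex * (S.mult : ℤ)

/-- The Apéry set `Ap(S) = {w ∈ S : w - m(S) ∉ S}`. -/
def apery (S : NumericalSemigroup) : Set ℕ :=
  {w : ℕ | w ∈ S.carrier ∧ ∀ u ∈ S.carrier, u + S.mult ≠ w}

theorem apery_finite (S : NumericalSemigroup) : S.apery.Finite := by
  apply Set.Finite.subset ((Set.finite_Iio S.mult).union (S.cofinite.image (· + S.mult)))
  intro x hx
  by_cases h : x < S.mult
  · exact Or.inl h
  · refine Or.inr ⟨x - S.mult, fun hmem => hx.2 _ hmem (by omega), ?_⟩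
    show x - S.mult + S.mult = x
    omega

/-- `w j`: the `(j+1)`-st smallest element of the Apéry set, so that
`Ap(S) = {w 0 < w 1 < ... < w (m-1)}` with `w 0 = 0`. -/
noncomputable def w (S : NumericalSemigroup) (j : ℕ) : ℕ :=
  (S.apery_finite.toFinset.sort (· ≤ ·)).getD j 0

/-- `ε_j`: the number of `k ∈ {0, ..., L-1}` such that `|I_k ∩ S| = j`. -/
noncomputable def eps (S : NumericalSemigroup) (j : ℕ) : ℕ :=
  {k : ℕ | (k : ℤ) < S.Lindex ∧ (S.carrier ∩ interval S.mult k).ncard = j}.ncard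

/-- `η_j`: the number of `k ∈ ℕ` such that `|I_k ∩ S| = j`. -/
noncomputable def eta (S : NumericalSemigroup) (j : ℕ) : ℕ :=
  {k : ℕ | (S.carrier ∩ interval S.mult k).ncard = j}.ncard

end NumericalSemigroup

/-! Each residue class modulo `m` contains exactly one Apéry element `w`, and an `x ≡ w` lies
in `S` iff `w ≤ x`. Hence `|I_k ∩ S|` is the number of `i` with `⌊w_i/m⌋ ≤ k`; since the `w_i`
increase, this number is `j` exactly when `⌊w_{j-1}/m⌋ ≤ k < ⌊w_j/m⌋`. -/

open Finset

theorem card_filter_le_eq_iff_of_monotoneOn {f : ℕ → ℕ} {n j k : ℕ}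
    (hf : MonotoneOn f (Set.Iio n)) (hj : 0 < j) (hjn : j < n) :
    #{i ∈ range n | f i ≤ k} = j ↔ f (j - 1) ≤ k ∧ k < f j := by
  have hf' : ∀ {i i'}, i ≤ i' → i' < n → f i ≤ f i' := fun h h' =>
    hf (show _ < n by omega) h' h
  constructor
  · intro hcard
    constructor
    · by_contra! hk
      have hsub : {i ∈ range n | f i ≤ k} ⊆ range (j - 1) := by
        intro i hi
        rw [mem_filter, mem_range] at hi
        rw [mem_range]
        by_contra! hij
        have := hf' hij hi.1
        omega
      have := card_le_card hsub
      rw [card_range] at this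
      omega
    · by_contra! hk
      have hsub : range (j + 1) ⊆ {i ∈ range n | f i ≤ k} := by
        intro i hi
        rw [mem_range] at hi
        rw [mem_filter, mem_range]
        exact ⟨by omega, (hf' (by omega) hjn).trans hk⟩
      have := card_le_card hsub
      rw [card_range] at this
      omega
  · rintro ⟨hlo, hhi⟩
    convert card_range j using 2
    ext i
    rw [mem_filter, mem_range, mem_range]
    constructor
    · rintro ⟨hi, hik⟩
      by_contra! hij
      have := hf' hij hi
      omega
    · intro hij
      exact ⟨by omega, (hf' (by omega) (by omega)).trans hlo⟩

namespace NumericalSemigroup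

section Apery

variable (S : NumericalSemigroup)

theorem exists_forall_ge_mem : ∃ N, ∀ n, N ≤ n → n ∈ S.carrier := by
  obtain ⟨N, hN⟩ := S.cofinite.bddAbove
  refine ⟨N + 1, fun n hn => ?_⟩
  by_contra h
  have := hN h
  omega

theorem mult_mem_and_pos : S.mult ∈ S.carrier ∧ 0 < S.mult := by
  obtain ⟨N, hN⟩ := S.exists_forall_ge_mem
  exact Nat.sInf_mem (s := {s | s ∈ S.carrier ∧ 0 < s}) ⟨N + 1, hN _ (by omega), by omega⟩

theorem mult_pos : 0 < S.mult := S.mult_mem_and_pos.2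

variable {S}

theorem add_mul_mult_mem {s : ℕ} (hs : s ∈ S.carrier) (t : ℕ) :
    s + t * S.mult ∈ S.carrier := by
  induction t with
  | zero => simpa using hs
  | succ t ih =>
    rw [Nat.succ_mul, ← Nat.add_assoc]
    exact S.add_mem ih S.mult_mem_and_pos.1

theorem exists_mem_apery_add_mul {s : ℕ} (hs : s ∈ S.carrier) :
    ∃ a ∈ S.apery, ∃ t, s = a + t * S.mult := by
  induction s using Nat.strong_induction_on with
  | _ s ih =>
    by_cases hap : s ∈ S.apery
    · exact ⟨s, hap, 0, by simp⟩
    · obtain ⟨u, hu, rfl⟩ : ∃ u ∈ S.carrier, u + S.mult = s := by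
        simpa [apery, hs] using hap
      obtain ⟨a, ha, t, rfl⟩ := ih u (by have := S.mult_pos; omega) hu
      exact ⟨a, ha, t + 1, by ring⟩

theorem eq_of_mem_apery_of_mod_eq {a b : ℕ} (ha : a ∈ S.apery) (hb : b ∈ S.apery)
    (h : a % S.mult = b % S.mult) : a = b := by
  wlog hab : a ≤ b generalizing a b
  · exact (this hb ha h.symm (by omega)).symm
  obtain ⟨t, ht⟩ := (Nat.modEq_iff_dvd' hab).1 h
  rcases t with _ | t
  · omega
  · exfalso
    refine hb.2 (a + t * S.mult) (add_mul_mult_mem ha.1 t) ?_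
    rw [Nat.mul_succ, Nat.mul_comm] at ht
    omega

theorem mem_iff_exists_mem_apery {n : ℕ} :
    n ∈ S.carrier ↔ ∃ a ∈ S.apery, a % S.mult = n % S.mult ∧ a ≤ n := by
  constructor
  · intro hn
    obtain ⟨a, ha, t, rfl⟩ := exists_mem_apery_add_mul hn
    exact ⟨a, ha, by simp, by omega⟩
  · rintro ⟨a, ha, hmod, hle⟩
    obtain ⟨t, ht⟩ := (Nat.modEq_iff_dvd' hle).1 hmod
    rw [show n = a + t * S.mult by rw [Nat.mul_comm] at ht; omega]
    exact add_mul_mult_mem ha.1 t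

variable (S)

theorem exists_mem_apery_mod_eq (r : ℕ) : ∃ a ∈ S.apery, a % S.mult = r % S.mult := by
  obtain ⟨N, hN⟩ := S.exists_forall_ge_mem
  have hmem : r + N * S.mult ∈ S.carrier :=
    hN _ (le_add_left (Nat.le_mul_of_pos_right N S.mult_pos))
  obtain ⟨a, ha, hmod, -⟩ := mem_iff_exists_mem_apery.1 hmem
  exact ⟨a, ha, by simpa using hmod⟩

theorem card_apery : S.apery_finite.toFinset.card = S.mult := by
  rw [← card_range S.mult]
  refine card_nbij (· % S.mult) (fun a _ => by simpa using Nat.mod_lt a S.mult_pos) ?_ ?_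
  · intro a ha b hb h
    exact eq_of_mem_apery_of_mod_eq (by simpa using ha) (by simpa using hb) h
  · intro r hr
    obtain ⟨a, ha, hmod⟩ := S.exists_mem_apery_mod_eq r
    refine ⟨a, by simpa using ha, ?_⟩
    simpa [Nat.mod_eq_of_lt (mem_range.1 hr)] using hmod

theorem w_eq_orderEmbOfFin (i : Fin S.mult) :
    S.w i = S.apery_finite.toFinset.orderEmbOfFin S.card_apery i := by
  rw [w, List.getD_eq_getElem]
  rfl

theorem strictMonoOn_w : StrictMonoOn S.w (Set.Iio S.mult) := fun i hi i' hi' h => by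
  simpa [← w_eq_orderEmbOfFin] using
    (S.apery_finite.toFinset.orderEmbOfFin S.card_apery).strictMono
      (show (⟨i, hi⟩ : Fin S.mult) < ⟨i', hi'⟩ from h)

theorem image_w_range : (range S.mult).image S.w = S.apery_finite.toFinset := by
  conv_rhs => rw [← image_orderEmbOfFin_univ _ S.card_apery]
  ext x
  simp only [mem_image, mem_range, mem_univ, true_and, ← w_eq_orderEmbOfFin]
  exact ⟨fun ⟨i, hi, hx⟩ => ⟨⟨i, hi⟩, hx⟩, fun ⟨i, hx⟩ => ⟨i, i.2, hx⟩⟩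

theorem mem_inter_interval_iff {k x : ℕ} :
    x ∈ S.carrier ∩ interval S.mult k ↔
      ∃ a ∈ S.apery, a / S.mult ≤ k ∧ k * S.mult + a % S.mult = x := by
  have hm := S.mult_pos
  simp only [Set.mem_inter_iff, interval, Set.mem_Ico, Nat.succ_mul]
  constructor
  · rintro ⟨hx, hlo, hhi⟩
    obtain ⟨a, ha, hmod, hle⟩ := mem_iff_exists_mem_apery.1 hx
    have hxk : x / S.mult = k := Nat.div_eq_of_lt_le hlo (by rwa [Nat.succ_mul])
    refine ⟨a, ha, hxk ▸ Nat.div_le_div_right hle, ?_⟩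
    rw [hmod, ← hxk, Nat.div_add_mod']
  · rintro ⟨a, ha, hak, rfl⟩
    have hle : a / S.mult * S.mult ≤ k * S.mult := Nat.mul_le_mul_right _ hak
    have := Nat.div_add_mod' a S.mult
    have := Nat.mod_lt a hm
    refine ⟨mem_iff_exists_mem_apery.2 ⟨a, ha, by simp, by omega⟩, by omega, by omega⟩

theorem ncard_inter_interval_eq_card_filter_w (k : ℕ) :
    (S.carrier ∩ interval S.mult k).ncard = #{i ∈ range S.mult | S.w i / S.mult ≤ k} := by
  have hset : S.carrier ∩ interval S.mult k =
      ↑({a ∈ S.apery_finite.toFinset | a / S.mult ≤ k}.image (k * S.mult + · % S.mult)) := by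
    ext x
    rw [mem_inter_interval_iff]
    simp [and_assoc]
  have hinj : Set.InjOn (k * S.mult + · % S.mult)
      ↑{a ∈ S.apery_finite.toFinset | a / S.mult ≤ k} := fun a ha b hb h => by
    simp only [coe_filter, Set.Finite.mem_toFinset] at ha hb
    exact eq_of_mem_apery_of_mod_eq ha.1 hb.1 (by simpa using h)
  rw [hset, Set.ncard_coe_finset, card_image_of_injOn hinj, ← image_w_range, filter_image,
    card_image_of_injOn (S.strictMonoOn_w.injOn.mono fun i hi => by simp_all)]

end Apery

/-- For every `j ∈ {1, ..., m-1}`, `η_j = ⌊w_j/m⌋ - ⌊w_{j-1}/m⌋`. -/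
theorem eta_eq_floor_sub_floor (S : NumericalSemigroup)
    (j : ℕ) (hj1 : 1 ≤ j) (hj2 : j ≤ S.mult - 1) :
    (S.eta j : ℤ) = ((S.w j / S.mult : ℕ) : ℤ) - ((S.w (j - 1) / S.mult : ℕ) : ℤ) := by
  have hjm : j < S.mult := by have := S.mult_pos; omega
  have hmono : MonotoneOn (fun i => S.w i / S.mult) (Set.Iio S.mult) :=
    fun i hi i' hi' h => Nat.div_le_div_right (S.strictMonoOn_w.monotoneOn hi hi' h)
  have hset : {k | (S.carrier ∩ interval S.mult k).ncard = j} =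
      Set.Ico (S.w (j - 1) / S.mult) (S.w j / S.mult) := by
    ext k
    rw [Set.mem_Ico, ← card_filter_le_eq_iff_of_monotoneOn hmono hj1 hjm,
      ← S.ncard_inter_interval_eq_card_filter_w]
    rfl
  rw [eta, hset, Set.ncard_Ico_nat,
    Nat.cast_sub (hmono (show j - 1 < S.mult by omega) hjm (Nat.sub_le j 1))]

end NumericalSemigroup
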